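/- (Sampling theorem, joint distribution form) For all unit vectors a, b ∈ S² and all α, β ∈ {-1, 1}, (1/(2π)) ∫_{S²} |a·λ| · 1[-sgn(a·λ) = α] · 1[sgn(b·λ) = β] dσ(λ) = (1 - αβ a·b)/4. That is, if Alice and Bob share a random variable λ_s distributed with density ρ_a(λ) = |a·λ|/(2π) and output A = -sgn(a·λ_s) and B = sgn(b·λ_s), their outputs have the quantum joint distribution p(A, B) = (1 - AB a·b)/4 of the singlet state. -/

import Mathlib

open MeasureTheory Metric
open scoped RealInnerProductSpace

/-- The unit sphere in ℝ³. -/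
noncomputable abbrev Sphere2 := Metric.sphere (0 : EuclideanSpace ℝ (Fin 3)) 1

/-- The surface measure `σ` on the unit sphere of ℝ³ (total mass `4π`). -/
noncomputable def sphereMeasure : Measure Sphere2 :=
  (volume : Measure (EuclideanSpace ℝ (Fin 3))).toSphere

/-- `sgn(x) = 1` if `x ≥ 0`, `-1` if `x < 0`. -/
noncomputable def sgn (x : ℝ) : ℝ := if 0 ≤ x then 1 else -1

namespace SamplingAux

open Real Set

local notation "E3" => EuclideanSpace ℝ (Fin 3)

lemma sgn_spec (s : ℝ) : (sgn s = 1 ∧ |s| = s) ∨ (sgn s = -1 ∧ |s| = -s) := by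
  unfold sgn
  rcases le_or_gt 0 s with h | h
  · exact Or.inl ⟨if_pos h, abs_of_nonneg h⟩
  · exact Or.inr ⟨if_neg (not_le.2 h), abs_of_neg h⟩

lemma sgn_pos_smul {r t : ℝ} (hr : 0 < r) : sgn (r * t) = sgn t := by
  unfold sgn
  rcases le_or_gt 0 t with h | h
  · rw [if_pos h, if_pos (by positivity)]
  · rw [if_neg (not_le.2 h), if_neg (not_le.2 (mul_neg_of_pos_of_neg hr h))]

lemma mul_sgn_self (t : ℝ) : t * sgn t = |t| := by
  unfold sgn
  rcases le_or_gt 0 t with h | h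
  · rw [if_pos h, mul_one, abs_of_nonneg h]
  · rw [if_neg (not_le.2 h), abs_of_neg h]; ring

lemma abs_sgn (t : ℝ) : |sgn t| = 1 := by unfold sgn; split_ifs <;> simp

lemma sgn_neg_of_ne {t : ℝ} (ht : t ≠ 0) : sgn (-t) = -sgn t := by
  unfold sgn
  rcases lt_or_gt_of_ne ht with h | h
  · rw [if_pos (by linarith), if_neg (not_le.2 h)]; ring
  · rw [if_neg (not_le.2 (by linarith)), if_pos h.le]

lemma measurable_sgn : Measurable sgn :=
  Measurable.ite (measurableSet_le measurable_const measurable_id) measurable_const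
    measurable_const

lemma finrank_E3 : Module.finrank ℝ E3 = 3 := finrank_euclideanSpace_fin

lemma key_pointwise (s t α β : ℝ) (hα : α = 1 ∨ α = -1) (hβ : β = 1 ∨ β = -1) :
    |s| * ((if -sgn s = α then (1 : ℝ) else 0) * (if sgn t = β then (1 : ℝ) else 0))
      = ((1 / 4) * |s| + (-α / 4) * s)
        + ((β / 4) * (|s| * sgn t) + (-(α * β) / 4) * (s * sgn t)) := by
  rcases hα with rfl | rfl <;> rcases hβ with rfl | rfl <;>
    rcases sgn_spec s with ⟨h1, h2⟩ | ⟨h1, h2⟩ <;>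
    rcases sgn_spec t with ⟨g1, g2⟩ | ⟨g1, g2⟩ <;>
    rw [h1, g1] <;> rw [h2] <;> norm_num <;> ring



lemma volumeIoiPow_cube : (∫ r : Ioi (0:ℝ), ((r : ℝ) * Real.exp (-(r:ℝ) ^ 2))
    ∂(Measure.volumeIoiPow 2)) = 1 / 2 := by
  simp only [Measure.volumeIoiPow, ENNReal.ofReal]
  rw [integral_withDensity_eq_integral_smul ((measurable_subtype_coe.pow_const _).real_toNNReal),
    integral_subtype_comap measurableSet_Ioi (fun a : ℝ => (a ^ 2).toNNReal • (a * Real.exp (-a ^ 2)))]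
  have h1 : ∀ x ∈ Ioi (0:ℝ), (x ^ 2).toNNReal • (x * Real.exp (-x ^ 2))
      = x ^ (3:ℝ) * Real.exp (-x ^ (2:ℝ)) := by
    intro x hx
    have hx0 : (0:ℝ) < x := hx
    rw [NNReal.smul_def, Real.coe_toNNReal _ (by positivity),
      show x ^ (3:ℝ) = x ^ (3:ℕ) from Real.rpow_natCast x 3,
      show x ^ (2:ℝ) = x ^ (2:ℕ) from Real.rpow_natCast x 2, smul_eq_mul]
    push_cast
    ring
  rw [setIntegral_congr_fun measurableSet_Ioi h1,
    integral_rpow_mul_exp_neg_rpow two_pos (by norm_num : (-1:ℝ) < 3)]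
  rw [show ((3:ℝ)+1)/2 = 1 + 1 by norm_num, Real.Gamma_add_one one_ne_zero, Real.Gamma_one]
  norm_num

lemma sphere_to_gauss (h : Sphere2 → ℝ) (g : E3 → ℝ)
    (hg : ∀ (ω : Metric.sphere (0 : E3) 1) (r : ℝ), 0 < r →
      g (r • (ω : E3)) = h ω * (r * Real.exp (-r ^ 2))) :
    ∫ ω, h ω ∂sphereMeasure = 2 * ∫ x, g x := by
  unfold sphereMeasure
  have h2 : Module.finrank ℝ E3 - 1 = 2 := by
    rw [finrank_euclideanSpace_fin]
  have key : ∫ x, g x = (∫ ω, h ω ∂(volume : Measure E3).toSphere) * (1 / 2) := by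
    calc ∫ x, g x
        = ∫ x : ({0}ᶜ : Set E3), g x.1 ∂((volume : Measure E3).comap Subtype.val) := by
          rw [integral_subtype_comap (measurableSet_singleton _).compl fun x ↦ g x,
            restrict_compl_singleton]
      _ = ∫ p : Metric.sphere (0 : E3) 1 × Ioi (0:ℝ),
            g (((homeomorphUnitSphereProd E3).symm p : ({0}ᶜ : Set E3)) : E3)
            ∂((volume : Measure E3).toSphere.prod (Measure.volumeIoiPow 2)) := by
          rw [← h2]
          have := (volume : Measure E3).measurePreserving_homeomorphUnitSphereProd.integral_comp
            (Homeomorph.measurableEmbedding _)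
            (fun p : Metric.sphere (0 : E3) 1 × Ioi (0:ℝ) =>
              g (((homeomorphUnitSphereProd E3).symm p : ({0}ᶜ : Set E3)) : E3))
          rw [← this]
          simp only [Homeomorph.symm_apply_apply]
      _ = ∫ p : Metric.sphere (0 : E3) 1 × Ioi (0:ℝ),
            h p.1 * ((p.2 : ℝ) * Real.exp (-(p.2 : ℝ) ^ 2))
            ∂((volume : Measure E3).toSphere.prod (Measure.volumeIoiPow 2)) := by
          refine integral_congr_ae (Filter.Eventually.of_forall fun p => ?_)
          have hcoe : (((homeomorphUnitSphereProd E3).symm p : ({0}ᶜ : Set E3)) : E3)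
              = (p.2 : ℝ) • (p.1 : E3) := by
            simp [homeomorphUnitSphereProd_symm_apply_coe]
          have hval := hg p.1 p.2 p.2.2
          simp only [hcoe, hval]
      _ = (∫ ω, h ω ∂(volume : Measure E3).toSphere) * ∫ r : Ioi (0:ℝ), ((r : ℝ) * Real.exp (-(r:ℝ) ^ 2))
            ∂(Measure.volumeIoiPow 2) :=
            integral_prod_mul (fun ω => h ω) (fun r : Ioi (0:ℝ) => (r:ℝ) * Real.exp (-(r:ℝ) ^ 2))
      _ = (∫ ω, h ω ∂(volume : Measure E3).toSphere) * (1 / 2) := by rw [volumeIoiPow_cube]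
  rw [key]; ring

lemma gauss_coord (f : ℝ → ℝ) (u : E3) (hu : ‖u‖ = 1) :
    ∫ x : E3, f ⟪u, x⟫ * Real.exp (-‖x‖ ^ 2)
      = (∫ t : ℝ, f t * Real.exp (-t ^ 2)) * Real.pi := by
  obtain ⟨B, hB⟩ : ∃ B : OrthonormalBasis (Fin 3) ℝ E3, B 0 = u := by
    have hv : Orthonormal ℝ (({0} : Set (Fin 3)).restrict fun _ => u) := by
      constructor
      · intro i; exact hu
      · intro i j hij
        exact absurd (Subtype.ext ((Set.eq_of_mem_singleton i.2).trans
          (Set.eq_of_mem_singleton j.2).symm)) hij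
    obtain ⟨B, hB⟩ := hv.exists_orthonormalBasis_extension_of_card_eq
      (by simp [finrank_euclideanSpace_fin])
    exact ⟨B, hB 0 rfl⟩
  calc ∫ x : E3, f ⟪u, x⟫ * Real.exp (-‖x‖ ^ 2)
      = ∫ y : EuclideanSpace ℝ (Fin 3), f (y 0) * Real.exp (-‖y‖ ^ 2) := by
        have := B.measurePreserving_repr.integral_comp
          (B.repr.toHomeomorph.measurableEmbedding)
          (fun y : EuclideanSpace ℝ (Fin 3) => f (y 0) * Real.exp (-‖y‖ ^ 2))
        rw [← this]
        refine integral_congr_ae (Filter.Eventually.of_forall fun x => ?_)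
        simp only []
        rw [← hB, ← B.repr_apply_apply x 0, B.repr.norm_map]
    _ = ∫ z : Fin 3 → ℝ, f (z 0) * Real.exp (-(∑ i, z i ^ 2)) := by
        have := (MeasurePreserving.symm _
            (EuclideanSpace.volume_preserving_symm_measurableEquiv_toLp (Fin 3))).integral_comp
          (MeasurableEquiv.measurableEmbedding _)
          (fun y : EuclideanSpace ℝ (Fin 3) => f (y 0) * Real.exp (-‖y‖ ^ 2))
        rw [← this]
        refine integral_congr_ae (Filter.Eventually.of_forall fun z => ?_)
        simp only []
        have h0 : ((MeasurableEquiv.toLp 2 (Fin 3 → ℝ)).symm.symm z) 0 = z 0 := rfl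
        have hn : ‖(MeasurableEquiv.toLp 2 (Fin 3 → ℝ)).symm.symm z‖ ^ 2 = ∑ i, z i ^ 2 := by
          rw [EuclideanSpace.norm_eq, Real.sq_sqrt (by positivity)]
          refine Finset.sum_congr rfl fun i _ => ?_
          rw [Real.norm_eq_abs, sq_abs]; rfl
        rw [h0, hn]
    _ = ∏ i : Fin 3, ∫ t : ℝ,
          (if i = 0 then f t * Real.exp (-t ^ 2) else Real.exp (-t ^ 2)) := by
        rw [← MeasureTheory.integral_fintype_prod_eq_prod (ι := Fin 3)
          (fun (i : Fin 3) (t : ℝ) => if i = 0 then f t * Real.exp (-t ^ 2)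
            else Real.exp (-t ^ 2))]
        refine integral_congr_ae (Filter.Eventually.of_forall fun z => ?_)
        simp only [Fin.prod_univ_three, Fin.sum_univ_three, reduceIte,
          if_neg (by decide : ¬ ((1 : Fin 3) = 0)), if_neg (by decide : ¬ ((2 : Fin 3) = 0))]
        rw [show -(z 0 ^ 2 + z 1 ^ 2 + z 2 ^ 2)
            = -z 0 ^ 2 + -z 1 ^ 2 + -z 2 ^ 2 by ring, Real.exp_add, Real.exp_add]
        ring
    _ = (∫ t : ℝ, f t * Real.exp (-t ^ 2)) * Real.pi := by
        rw [Fin.prod_univ_three]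
        simp only [reduceIte, if_neg (by decide : ¬ ((1 : Fin 3) = 0)),
          if_neg (by decide : ¬ ((2 : Fin 3) = 0))]
        have hg : ∫ t : ℝ, Real.exp (-t ^ 2) = Real.sqrt Real.pi := by
          simpa using integral_gaussian 1
        rw [hg, mul_assoc, Real.mul_self_sqrt Real.pi_nonneg]

lemma integral_abs_gauss : ∫ t : ℝ, |t| * Real.exp (-t ^ 2) = 1 := by
  have h := integral_comp_abs (f := fun t : ℝ => t * Real.exp (-t ^ 2))
  simp only [sq_abs] at h
  rw [h]
  have h1 : ∀ x ∈ Set.Ioi (0:ℝ), x * Real.exp (-x ^ 2)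
      = x ^ (1:ℝ) * Real.exp (-x ^ (2:ℝ)) := by
    intro x hx
    rw [Real.rpow_one, show x ^ (2:ℝ) = x ^ (2:ℕ) from Real.rpow_natCast x 2]
  rw [setIntegral_congr_fun measurableSet_Ioi h1,
    integral_rpow_mul_exp_neg_rpow two_pos (by norm_num : (-1:ℝ) < 1),
    show ((1:ℝ)+1)/2 = 1 by norm_num, Real.Gamma_one]
  norm_num

lemma integral_id_gauss : ∫ t : ℝ, t * Real.exp (-t ^ 2) = 0 := by
  have h := MeasureTheory.integral_neg_eq_self
    (fun t : ℝ => t * Real.exp (-t ^ 2)) (volume : Measure ℝ)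
  simp only [neg_sq, neg_mul] at h
  rw [integral_neg] at h
  linarith

lemma ae_inner_ne_zero (b : E3) (hb : b ≠ 0) :
    ∀ᵐ x : E3, ⟪b, x⟫ ≠ 0 := by
  have hset : {x : E3 | ⟪b, x⟫ = 0} = ((ℝ ∙ b)ᗮ : Submodule ℝ E3) := by
    ext x
    simp only [Set.mem_setOf_eq, SetLike.mem_coe,
      Submodule.mem_orthogonal_singleton_iff_inner_left]
    rw [real_inner_comm]
  have hnull : (volume : Measure E3) {x : E3 | ⟪b, x⟫ = 0} = 0 := by
    rw [hset]
    refine Measure.addHaar_submodule _ _ fun htop => hb ?_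
    have hbmem : b ∈ (ℝ ∙ b)ᗮ := htop ▸ Submodule.mem_top
    have := Submodule.mem_orthogonal_singleton_iff_inner_left.mp hbmem
    rwa [real_inner_self_eq_norm_sq, pow_eq_zero_iff (by norm_num), norm_eq_zero] at this
  rw [MeasureTheory.ae_iff]
  simpa using hnull

lemma gauss_abs_sgn_zero (a b : E3) (hb : b ≠ 0) :
    ∫ x : E3, |⟪a, x⟫| * sgn ⟪b, x⟫ * Real.exp (-‖x‖ ^ 2) = 0 := by
  set F : E3 → ℝ := fun x => |⟪a, x⟫| * sgn ⟪b, x⟫ * Real.exp (-‖x‖ ^ 2) with hF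
  have h1 : ∫ x, F (-x) = ∫ x, F x := MeasureTheory.integral_neg_eq_self F _
  have h2 : ∫ x : E3, F (-x) = - ∫ x, F x := by
    rw [← integral_neg]
    refine integral_congr_ae ?_
    filter_upwards [ae_inner_ne_zero b hb] with x hx
    simp only [hF, inner_neg_right, norm_neg, abs_neg]
    rw [sgn_neg_of_ne hx]
    ring
  linarith

lemma gauss_perp_sgn_zero (c b : E3) (hc : ⟪c, b⟫ = 0) :
    ∫ x : E3, ⟪c, x⟫ * sgn ⟪b, x⟫ * Real.exp (-‖x‖ ^ 2) = 0 := by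
  set T : E3 ≃ₗᵢ[ℝ] E3 := Submodule.reflection (ℝ ∙ b) with hT
  have hTb : T b = b := Submodule.reflection_mem_subspace_eq_self (Submodule.mem_span_singleton_self b)
  have hcmem : c ∈ (ℝ ∙ b)ᗮ := Submodule.mem_orthogonal_singleton_iff_inner_left.mpr hc
  have hTc : T c = -c := Submodule.reflection_mem_subspace_orthogonalComplement_eq_neg hcmem
  have keyc : ∀ x : E3, ⟪c, T x⟫ = -⟪c, x⟫ := by
    intro x
    have := T.inner_map_map c x
    rw [hTc, inner_neg_left] at this
    linarith
  have keyb : ∀ x : E3, ⟪b, T x⟫ = ⟪b, x⟫ := by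
    intro x
    have := T.inner_map_map b x
    rwa [hTb] at this
  set F : E3 → ℝ := fun x => ⟪c, x⟫ * sgn ⟪b, x⟫ * Real.exp (-‖x‖ ^ 2) with hF
  have h1 : ∫ x : E3, F (T x) = ∫ x, F x :=
    (T.measurePreserving).integral_comp (T.toHomeomorph.measurableEmbedding) F
  have h2 : ∀ x : E3, F (T x) = -F x := by
    intro x
    simp only [hF, keyc, keyb, T.norm_map]
    ring
  have h3 : ∫ x : E3, F (T x) = - ∫ x, F x := by
    simp_rw [h2]
    exact integral_neg F
  linarith

lemma cont_inner (a : E3) : Continuous fun ω : Sphere2 => ⟪a, (ω : E3)⟫ :=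
  Continuous.inner continuous_const continuous_subtype_val

instance : IsFiniteMeasure sphereMeasure := by unfold sphereMeasure; infer_instance

lemma sphere_integrable (f : Sphere2 → ℝ) (C : ℝ) (hm : AEStronglyMeasurable f sphereMeasure)
    (hbd : ∀ ω, |f ω| ≤ C) : Integrable f sphereMeasure :=
  (integrable_const C).mono' hm (Filter.Eventually.of_forall fun ω => by
    simpa [Real.norm_eq_abs] using hbd ω)

lemma norm_coe_sphere (ω : Sphere2) : ‖(ω : E3)‖ = 1 := by
  simpa using mem_sphere_zero_iff_norm.mp ω.2

lemma inner_sphere_le (a : E3) (ω : Sphere2) : |⟪a, (ω : E3)⟫| ≤ ‖a‖ := by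
  have h := abs_real_inner_le_norm a (ω : E3)
  rwa [norm_coe_sphere, mul_one] at h

lemma S_abs (a : E3) (ha : ‖a‖ = 1) :
    ∫ ω : Sphere2, |⟪a, (ω : E3)⟫| ∂sphereMeasure = 2 * Real.pi := by
  rw [sphere_to_gauss (fun ω : Sphere2 => |⟪a, (ω : E3)⟫|)
    (fun x : E3 => |⟪a, x⟫| * Real.exp (-‖x‖ ^ 2)) ?hg]
  case hg =>
    intro ω r hr
    rw [real_inner_smul_right, norm_smul, norm_coe_sphere, Real.norm_eq_abs,
      abs_of_pos hr, mul_one, abs_mul, abs_of_pos hr]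
    ring
  rw [gauss_coord (fun t => |t|) a ha, integral_abs_gauss, one_mul]

lemma S_lin (a : E3) (ha : ‖a‖ = 1) :
    ∫ ω : Sphere2, ⟪a, (ω : E3)⟫ ∂sphereMeasure = 0 := by
  rw [sphere_to_gauss (fun ω : Sphere2 => ⟪a, (ω : E3)⟫)
    (fun x : E3 => ⟪a, x⟫ * Real.exp (-‖x‖ ^ 2)) ?hg]
  case hg =>
    intro ω r hr
    rw [real_inner_smul_right, norm_smul, norm_coe_sphere, Real.norm_eq_abs,
      abs_of_pos hr, mul_one]
    ring
  rw [gauss_coord (fun t => t) a ha, integral_id_gauss, zero_mul, mul_zero]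

lemma S_abs_sgn (a b : E3) (hb : b ≠ 0) :
    ∫ ω : Sphere2, |⟪a, (ω : E3)⟫| * sgn ⟪b, (ω : E3)⟫ ∂sphereMeasure = 0 := by
  rw [sphere_to_gauss (fun ω : Sphere2 => |⟪a, (ω : E3)⟫| * sgn ⟪b, (ω : E3)⟫)
    (fun x : E3 => |⟪a, x⟫| * sgn ⟪b, x⟫ * Real.exp (-‖x‖ ^ 2)) ?hg]
  case hg =>
    intro ω r hr
    rw [real_inner_smul_right a, real_inner_smul_right b, sgn_pos_smul hr, norm_smul,
      norm_coe_sphere, Real.norm_eq_abs, abs_of_pos hr, mul_one, abs_mul, abs_of_pos hr]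
    ring
  rw [gauss_abs_sgn_zero a b hb, mul_zero]

lemma S_perp_sgn (c b : E3) (hc : ⟪c, b⟫ = 0) :
    ∫ ω : Sphere2, ⟪c, (ω : E3)⟫ * sgn ⟪b, (ω : E3)⟫ ∂sphereMeasure = 0 := by
  rw [sphere_to_gauss (fun ω : Sphere2 => ⟪c, (ω : E3)⟫ * sgn ⟪b, (ω : E3)⟫)
    (fun x : E3 => ⟪c, x⟫ * sgn ⟪b, x⟫ * Real.exp (-‖x‖ ^ 2)) ?hg]
  case hg =>
    intro ω r hr
    rw [real_inner_smul_right c, real_inner_smul_right b, sgn_pos_smul hr, norm_smul,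
      norm_coe_sphere, Real.norm_eq_abs, abs_of_pos hr, mul_one]
    ring
  rw [gauss_perp_sgn_zero c b hc, mul_zero]

lemma S_lin_sgn (a b : E3) (ha : ‖a‖ = 1) (hb : ‖b‖ = 1) :
    ∫ ω : Sphere2, ⟪a, (ω : E3)⟫ * sgn ⟪b, (ω : E3)⟫ ∂sphereMeasure
      = 2 * Real.pi * ⟪a, b⟫ := by
  set c : E3 := a - ⟪a, b⟫ • b with hcdef
  have hc : ⟪c, b⟫ = 0 := by
    rw [hcdef, inner_sub_left, real_inner_smul_left, real_inner_self_eq_norm_sq, hb]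
    ring
  have hpt : ∀ ω : Sphere2, ⟪a, (ω : E3)⟫ * sgn ⟪b, (ω : E3)⟫
      = ⟪a, b⟫ * |⟪b, (ω : E3)⟫| + ⟪c, (ω : E3)⟫ * sgn ⟪b, (ω : E3)⟫ := by
    intro ω
    have h1 : ⟪c, (ω : E3)⟫ = ⟪a, (ω : E3)⟫ - ⟪a, b⟫ * ⟪b, (ω : E3)⟫ := by
      rw [hcdef, inner_sub_left, real_inner_smul_left]
    rw [h1, ← mul_sgn_self ⟪b, (ω : E3)⟫]
    ring
  have Int1 : Integrable (fun ω : Sphere2 => ⟪a, b⟫ * |⟪b, (ω : E3)⟫|) sphereMeasure := by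
    refine Integrable.const_mul ?_ _
    exact sphere_integrable _ 1 ((cont_inner b).abs.aestronglyMeasurable)
      (fun ω => by simpa [abs_abs, hb] using inner_sphere_le b ω)
  have Int2 : Integrable (fun ω : Sphere2 => ⟪c, (ω : E3)⟫ * sgn ⟪b, (ω : E3)⟫)
      sphereMeasure := by
    refine sphere_integrable _ ‖c‖
      (((cont_inner c).measurable.mul
        (measurable_sgn.comp (cont_inner b).measurable)).aestronglyMeasurable) fun ω => ?_
    rw [abs_mul, abs_sgn, mul_one]
    exact inner_sphere_le c ω
  calc ∫ ω : Sphere2, ⟪a, (ω : E3)⟫ * sgn ⟪b, (ω : E3)⟫ ∂sphereMeasure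
      = ∫ ω : Sphere2, (⟪a, b⟫ * |⟪b, (ω : E3)⟫| + ⟪c, (ω : E3)⟫ * sgn ⟪b, (ω : E3)⟫)
          ∂sphereMeasure :=
        integral_congr_ae (Filter.Eventually.of_forall hpt)
    _ = ⟪a, b⟫ * (2 * Real.pi) + 0 := by
        rw [integral_add Int1 Int2, integral_const_mul, S_abs b hb, S_perp_sgn c b hc]
    _ = 2 * Real.pi * ⟪a, b⟫ := by ring

end SamplingAux

/-- **Sampling theorem (joint distribution form).** For all unit vectors `a, b` and
all signs `α, β ∈ {-1, 1}`,
`(1/(2π)) ∫_{S²} |a·λ| · 1[-sgn(a·λ) = α] · 1[sgn(b·λ) = β] dσ(λ) = (1 - αβ a·b)/4`: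
outputs `A = -sgn(a·λ_s)`, `B = sgn(b·λ_s)` from a sample `λ_s ~ ρ_a = |a·λ|/(2π)`
have the quantum joint distribution of the singlet state. -/
theorem sampling_theorem_joint_distribution (a b : EuclideanSpace ℝ (Fin 3))
    (ha : ‖a‖ = 1) (hb : ‖b‖ = 1) (α β : ℝ)
    (hα : α = 1 ∨ α = -1) (hβ : β = 1 ∨ β = -1) :
    (1 / (2 * Real.pi)) *
      ∫ l : Sphere2, |⟪a, (l : EuclideanSpace ℝ (Fin 3))⟫| *
        ((if -sgn ⟪a, (l : EuclideanSpace ℝ (Fin 3))⟫ = α then (1 : ℝ) else 0) *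
          (if sgn ⟪b, (l : EuclideanSpace ℝ (Fin 3))⟫ = β then (1 : ℝ) else 0))
        ∂sphereMeasure
      = (1 - α * β * ⟪a, b⟫) / 4 := by
  have hb0 : b ≠ 0 := by
    intro h; rw [h, norm_zero] at hb; norm_num at hb
  have base1 : Integrable (fun ω : Sphere2 => |⟪a, (ω : EuclideanSpace ℝ (Fin 3))⟫|)
      sphereMeasure :=
    SamplingAux.sphere_integrable _ 1 ((SamplingAux.cont_inner a).abs.aestronglyMeasurable)
      (fun ω => by simpa [abs_abs, ha] using SamplingAux.inner_sphere_le a ω)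
  have base2 : Integrable (fun ω : Sphere2 => ⟪a, (ω : EuclideanSpace ℝ (Fin 3))⟫)
      sphereMeasure :=
    SamplingAux.sphere_integrable _ 1 ((SamplingAux.cont_inner a).aestronglyMeasurable)
      (fun ω => by simpa [ha] using SamplingAux.inner_sphere_le a ω)
  have base3 : Integrable (fun ω : Sphere2 =>
      |⟪a, (ω : EuclideanSpace ℝ (Fin 3))⟫| * sgn ⟪b, (ω : EuclideanSpace ℝ (Fin 3))⟫)
      sphereMeasure := by
    refine SamplingAux.sphere_integrable _ 1
      (((SamplingAux.cont_inner a).abs.measurable.mul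
        (SamplingAux.measurable_sgn.comp (SamplingAux.cont_inner b).measurable)).aestronglyMeasurable)
      fun ω => ?_
    rw [abs_mul, SamplingAux.abs_sgn, mul_one, abs_abs]
    simpa [ha] using SamplingAux.inner_sphere_le a ω
  have base4 : Integrable (fun ω : Sphere2 =>
      ⟪a, (ω : EuclideanSpace ℝ (Fin 3))⟫ * sgn ⟪b, (ω : EuclideanSpace ℝ (Fin 3))⟫)
      sphereMeasure := by
    refine SamplingAux.sphere_integrable _ 1
      (((SamplingAux.cont_inner a).measurable.mul
        (SamplingAux.measurable_sgn.comp (SamplingAux.cont_inner b).measurable)).aestronglyMeasurable)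
      fun ω => ?_
    rw [abs_mul, SamplingAux.abs_sgn, mul_one]
    simpa [ha] using SamplingAux.inner_sphere_le a ω
  have key : ∀ ω : Sphere2,
      |⟪a, (ω : EuclideanSpace ℝ (Fin 3))⟫| *
        ((if -sgn ⟪a, (ω : EuclideanSpace ℝ (Fin 3))⟫ = α then (1 : ℝ) else 0) *
          (if sgn ⟪b, (ω : EuclideanSpace ℝ (Fin 3))⟫ = β then (1 : ℝ) else 0))
      = ((1 / 4) * |⟪a, (ω : EuclideanSpace ℝ (Fin 3))⟫|
            + (-α / 4) * ⟪a, (ω : EuclideanSpace ℝ (Fin 3))⟫)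
        + ((β / 4) * (|⟪a, (ω : EuclideanSpace ℝ (Fin 3))⟫|
              * sgn ⟪b, (ω : EuclideanSpace ℝ (Fin 3))⟫)
          + (-(α * β) / 4) * (⟪a, (ω : EuclideanSpace ℝ (Fin 3))⟫
              * sgn ⟪b, (ω : EuclideanSpace ℝ (Fin 3))⟫)) :=
    fun ω => SamplingAux.key_pointwise _ _ α β hα hβ
  rw [integral_congr_ae (Filter.Eventually.of_forall key)]
  have intAB : Integrable (fun ω : Sphere2 =>
      (1/4 : ℝ) * |⟪a, (ω : EuclideanSpace ℝ (Fin 3))⟫|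
        + (-α/4) * ⟪a, (ω : EuclideanSpace ℝ (Fin 3))⟫) sphereMeasure :=
    (base1.const_mul (1/4)).add (base2.const_mul (-α/4))
  have intCD : Integrable (fun ω : Sphere2 =>
      (β/4) * (|⟪a, (ω : EuclideanSpace ℝ (Fin 3))⟫|
          * sgn ⟪b, (ω : EuclideanSpace ℝ (Fin 3))⟫)
        + (-(α*β)/4) * (⟪a, (ω : EuclideanSpace ℝ (Fin 3))⟫
          * sgn ⟪b, (ω : EuclideanSpace ℝ (Fin 3))⟫)) sphereMeasure :=
    (base3.const_mul (β/4)).add (base4.const_mul (-(α*β)/4))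
  simp only [integral_add intAB intCD,
    integral_add (base1.const_mul (1/4)) (base2.const_mul (-α/4)),
    integral_add (base3.const_mul (β/4)) (base4.const_mul (-(α*β)/4)),
    integral_const_mul]
  rw [SamplingAux.S_abs a ha, SamplingAux.S_lin a ha, SamplingAux.S_abs_sgn a b hb0,
    SamplingAux.S_lin_sgn a b ha hb]
  have hπ : Real.pi ≠ 0 := Real.pi_ne_zero
  field_simp
  ring
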